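/- arXiv:cond-mat/0004005 — 6 statements merged into one kernel-verified Lean document; each statement's English description precedes it below -/
import Mathlib

section
/- Assume ∫_{ℝ^d} |V(k)|²/ε(k) dk = +∞. Then for every g > 0 and every ε_d ∈ ℝ there exists a unique λ₁ > 0 satisfying the self-consistency equation λ₁ = g²·∫ |V(k)|²/(ε(k)+λ₁) dk − ε_d. -/
open MeasureTheory Set Filter
open scoped ENNReal Topology

/-! The map `λ ↦ ∫ |V|² / (ε + λ)` is antitone and, by dominated convergence, continuous on
`(0, ∞)`; by monotone convergence it is unbounded as `λ → 0⁺` because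
`∫ |V|² / ε = ∞`. Hence `λ ↦ λ - (g² ∫ |V|² / (ε + λ) - ε_d)` is strictly increasing and
continuous on `(0, ∞)`, negative near `0` and positive for large `λ`, so it has exactly one
zero. -/

theorem existsUnique_pos_eq_of_antitoneOn {h : ℝ → ℝ} (hmono : AntitoneOn h (Ioi 0))
    (hcont : ContinuousOn h (Ioi 0)) (hunbdd : ∀ C, ∃ l > 0, C ≤ h l) :
    ∃! l, 0 < l ∧ l = h l := by
  have hstrict : StrictMonoOn (fun l => l - h l) (Ioi 0) := fun x hx y hy hxy => by
    have := hmono hx hy hxy.le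
    dsimp only
    linarith
  obtain ⟨l₁, hl₁, hhl₁⟩ := hunbdd 1
  set l₀ := min l₁ 1
  have hl₀ : 0 < l₀ := lt_min hl₁ one_pos
  have hl₀_le : l₀ ≤ h l₀ :=
    (min_le_right _ _).trans (hhl₁.trans (hmono hl₀ hl₁ (min_le_left _ _)))
  set u := max l₀ (h l₀)
  have hl₀u : l₀ ≤ u := le_max_left _ _
  have hu : h u ≤ u := (hmono hl₀ (hl₀.trans_le hl₀u) hl₀u).trans (le_max_right _ _)
  have hIcc : Icc l₀ u ⊆ Ioi 0 := fun x hx => hl₀.trans_le hx.1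
  obtain ⟨l, hl, hl_eq⟩ := intermediate_value_Icc hl₀u
    ((continuousOn_id.sub hcont).mono hIcc) (show (0 : ℝ) ∈ Icc _ _ from
      ⟨by simpa using hl₀_le, by simpa using hu⟩)
  have hl_fix : l = h l := by simp only [Pi.sub_apply, id] at hl_eq; linarith
  exact ⟨l, ⟨hIcc hl, hl_fix⟩, fun y ⟨hy, hy_eq⟩ =>
    hstrict.injOn hy (hIcc hl) (show y - h y = l - h l by linarith)⟩

section ResolventIntegral

variable {α : Type*} [MeasurableSpace α] {μ : Measure α} {a b : α → ℝ}

noncomputable def resolventIntegral (μ : Measure α) (a b : α → ℝ) (l : ℝ) : ℝ :=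
  ∫ k, a k / (b k + l) ∂μ

theorem integrable_div_add (ha : Integrable a μ) (hb : AEMeasurable b μ)
    (hb0 : ∀ᵐ k ∂μ, 0 ≤ b k) {l : ℝ} (hl : 0 < l) :
    Integrable (fun k => a k / (b k + l)) μ := by
  refine (ha.norm.div_const l).mono'
    (ha.aemeasurable.div (hb.add_const l)).aestronglyMeasurable ?_
  filter_upwards [hb0] with k hbk
  rw [norm_div, Real.norm_of_nonneg (by linarith : 0 ≤ b k + l)]
  gcongr
  linarith

theorem resolventIntegral_antitoneOn (ha : Integrable a μ) (ha0 : ∀ᵐ k ∂μ, 0 ≤ a k)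
    (hb : AEMeasurable b μ) (hb0 : ∀ᵐ k ∂μ, 0 ≤ b k) :
    AntitoneOn (resolventIntegral μ a b) (Ioi 0) := fun l hl m hm hlm => by
  refine integral_mono_ae (integrable_div_add ha hb hb0 hm) (integrable_div_add ha hb hb0 hl) ?_
  filter_upwards [ha0, hb0] with k hak hbk
  have : 0 < b k + l := by linarith [mem_Ioi.mp hl]
  gcongr

theorem continuousOn_resolventIntegral (ha : Integrable a μ) (hb : AEMeasurable b μ)
    (hb0 : ∀ᵐ k ∂μ, 0 ≤ b k) :
    ContinuousOn (resolventIntegral μ a b) (Ioi 0) := fun l hl => by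
  refine ContinuousAt.continuousWithinAt ?_
  have hl : 0 < l := hl
  refine continuousAt_of_dominated (bound := fun k => ‖a k‖ / (l / 2))
    (Eventually.of_forall fun x => (ha.aemeasurable.div (hb.add_const x)).aestronglyMeasurable)
    ?_ (ha.norm.div_const _) ?_
  · filter_upwards [eventually_gt_nhds (half_lt_self hl)] with x hx
    filter_upwards [hb0] with k hbk
    rw [norm_div, Real.norm_of_nonneg (by linarith : 0 ≤ b k + x)]
    gcongr
    linarith
  · filter_upwards [hb0] with k hbk
    exact continuousAt_const.div (continuousAt_const.add continuousAt_id) (by linarith)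

theorem ofReal_resolventIntegral (ha : Integrable a μ) (ha0 : ∀ᵐ k ∂μ, 0 ≤ a k)
    (hb : AEMeasurable b μ) (hb0 : ∀ᵐ k ∂μ, 0 ≤ b k) {l : ℝ} (hl : 0 < l) :
    ENNReal.ofReal (resolventIntegral μ a b l)
      = ∫⁻ k, ENNReal.ofReal (a k) / ENNReal.ofReal (b k + l) ∂μ := by
  rw [resolventIntegral, ofReal_integral_eq_lintegral_ofReal (integrable_div_add ha hb hb0 hl)]
  · refine lintegral_congr_ae ?_
    filter_upwards [hb0] with k hbk
    exact ENNReal.ofReal_div_of_pos (by linarith)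
  · filter_upwards [ha0, hb0] with k hak hbk
    exact div_nonneg hak (by linarith)

theorem tendsto_lintegral_ofReal_div_add_one_div (ha : AEMeasurable a μ) (hb : AEMeasurable b μ) :
    Tendsto (fun n : ℕ => ∫⁻ k, ENNReal.ofReal (a k) / ENNReal.ofReal (b k + 1 / (n + 1)) ∂μ)
      atTop (𝓝 (∫⁻ k, ENNReal.ofReal (a k) / ENNReal.ofReal (b k) ∂μ)) := by
  refine lintegral_tendsto_of_tendsto_of_monotone
    (fun n => ha.ennreal_ofReal.div (hb.add_const _).ennreal_ofReal) ?_ ?_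
  · refine Eventually.of_forall fun k n m hnm => ?_
    refine ENNReal.div_le_div_left (ENNReal.ofReal_le_ofReal ?_) _
    gcongr
  · refine Eventually.of_forall fun k => ENNReal.Tendsto.const_div ?_ (Or.inl ENNReal.ofReal_ne_top)
    simpa using ENNReal.tendsto_ofReal
      (tendsto_const_nhds.add tendsto_one_div_add_atTop_nhds_zero_nat)

theorem exists_le_resolventIntegral (ha : Integrable a μ) (ha0 : ∀ᵐ k ∂μ, 0 ≤ a k)
    (hb : AEMeasurable b μ) (hb0 : ∀ᵐ k ∂μ, 0 ≤ b k)
    (hdiv : ∫⁻ k, ENNReal.ofReal (a k) / ENNReal.ofReal (b k) ∂μ = ⊤) (C : ℝ) :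
    ∃ l > 0, C ≤ resolventIntegral μ a b l := by
  have htendsto := tendsto_lintegral_ofReal_div_add_one_div ha.aemeasurable hb
  rw [hdiv] at htendsto
  obtain ⟨n, hn⟩ := (htendsto.eventually (eventually_gt_nhds ENNReal.ofReal_lt_top)).exists
  have hpos : (0 : ℝ) < 1 / (n + 1) := by positivity
  refine ⟨_, hpos, ?_⟩
  rw [← ofReal_resolventIntegral ha ha0 hb hb0 hpos] at hn
  exact (ENNReal.ofReal_lt_ofReal_iff'.mp hn).1.le

end ResolventIntegral

theorem anderson_selfconsistency_existsUnique_general {d : ℕ}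
    (ε : EuclideanSpace ℝ (Fin d) → ℝ) (hε : Measurable ε)
    (hε0 : ∀ᵐ k ∂volume, 0 ≤ ε k)
    (V : EuclideanSpace ℝ (Fin d) → ℂ) (hV : MemLp V 2 volume)
    (hdiv : ∫⁻ k, ENNReal.ofReal (‖V k‖ ^ 2) / ENNReal.ofReal (ε k) ∂volume = ⊤) :
    ∀ g εd : ℝ, 0 < g →
      ∃! lam : ℝ, 0 < lam ∧
        lam = g ^ 2 * (∫ k, ‖V k‖ ^ 2 / (ε k + lam)) - εd := by
  intro g εd hg
  have ha : Integrable (fun k => ‖V k‖ ^ 2) volume := hV.norm.integrable_sq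
  have ha0 : ∀ᵐ k ∂volume, 0 ≤ ‖V k‖ ^ 2 := ae_of_all _ fun k => sq_nonneg _
  have hg2 : 0 < g ^ 2 := by positivity
  set I := resolventIntegral volume (fun k => ‖V k‖ ^ 2) ε
  refine existsUnique_pos_eq_of_antitoneOn (h := fun l => g ^ 2 * I l - εd) ?_ ?_ ?_
  · intro x hx y hy hxy
    have := resolventIntegral_antitoneOn ha ha0 hε.aemeasurable hε0 hx hy hxy
    show g ^ 2 * I y - εd ≤ g ^ 2 * I x - εd
    gcongr
  · exact (continuousOn_const.mul
      (continuousOn_resolventIntegral ha hε.aemeasurable hε0)).sub continuousOn_const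
  · intro C
    obtain ⟨l, hl, hCl⟩ :=
      exists_le_resolventIntegral ha ha0 hε.aemeasurable hε0 hdiv ((C + εd) / g ^ 2)
    refine ⟨l, hl, ?_⟩
    rw [div_le_iff₀' hg2] at hCl
    show C ≤ g ^ 2 * I l - εd
    linarith

/-- Assume `∫ |V k|² / ε k dk = +∞`. Then for every `g > 0` and every `εd ∈ ℝ` there is a
unique `λ₁ > 0` solving the self-consistency equation
`λ₁ = g² · ∫ |V k|² / (ε k + λ₁) dk − εd`. -/
theorem anderson_selfconsistency_existsUnique {d : ℕ} (hd : 0 < d)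
    (ε : EuclideanSpace ℝ (Fin d) → ℝ) (hε : Measurable ε)
    (hε0 : ∀ᵐ k ∂volume, 0 ≤ ε k)
    (V : EuclideanSpace ℝ (Fin d) → ℂ) (hV : MemLp V 2 volume)
    (hdiv : ∫⁻ k, ENNReal.ofReal (‖V k‖ ^ 2) / ENNReal.ofReal (ε k) ∂volume = ⊤) :
    ∀ g εd : ℝ, 0 < g →
      ∃! lam : ℝ, 0 < lam ∧
        lam = g ^ 2 * (∫ k, ‖V k‖ ^ 2 / (ε k + lam)) - εd :=
  anderson_selfconsistency_existsUnique_general ε hε hε0 V hV hdiv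
end

section
/- For every μ ≥ λ₁ one has φ(μ) > 0. More precisely: (i) if λ₁ ≤ μ ≤ λ₁ + U·(1+x₁²)⁻², then φ(μ) ≥ U; (ii) if μ > λ₁ + U·(1+x₁²)⁻², then φ(μ) ≥ U + (1+x₁²)·(μ−λ₁). In particular φ has no zero in [λ₁, ∞). -/
open MeasureTheory

/-!
Write `s = 1 + x₁²` and `δ = μ - λ₁ ≥ 0`. Only the bounds `0 ≤ W(μ) ≤ 1/μ` enter. When
`s²δ ≤ U` every summand of `φ(μ) - U` is nonnegative. When `s²δ > U` the factor
`U - s²δ` is negative, so `W(μ) ≤ 1/μ` gives `φ(μ) ≥ U + s²δ + (x₁²/s)·δ·(U - s²δ)/μ`, and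
with `μ = λ₁ + δ` this exceeds `U + sδ` by `x₁²·δ·(s²λ₁ + U)/(sμ) ≥ 0`.
-/

section ResolventBound

variable {α : Type*} [MeasurableSpace α] {ν : Measure α} {g ε : α → ℝ} {m : ℝ}

lemma integrable_div_add_const_of_nonneg (hg : Integrable g ν) (hε : AEMeasurable ε ν)
    (hε0 : ∀ᵐ k ∂ν, 0 ≤ ε k) (hm : 0 < m) : Integrable (fun k => g k / (ε k + m)) ν := by
  refine (hg.norm.div_const m).mono'
    (hg.aestronglyMeasurable.aemeasurable.div (hε.add_const m)).aestronglyMeasurable ?_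
  filter_upwards [hε0] with k hk
  rw [norm_div, Real.norm_of_nonneg (by linarith : 0 ≤ ε k + m)]
  exact div_le_div_of_nonneg_left (norm_nonneg _) hm (by linarith)

lemma integral_div_add_const_le (hg : Integrable g ν) (hg0 : ∀ᵐ k ∂ν, 0 ≤ g k)
    (hε : AEMeasurable ε ν) (hε0 : ∀ᵐ k ∂ν, 0 ≤ ε k) (hm : 0 < m) :
    ∫ k, g k / (ε k + m) ∂ν ≤ (∫ k, g k ∂ν) / m := by
  rw [← integral_div]
  refine integral_mono_ae (integrable_div_add_const_of_nonneg hg hε hε0 hm)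
    (hg.div_const m) ?_
  filter_upwards [hg0, hε0] with k hgk hk
  exact div_le_div_of_nonneg_left hgk hm (by linarith)

lemma integral_div_add_const_nonneg (hg0 : ∀ᵐ k ∂ν, 0 ≤ g k) (hε0 : ∀ᵐ k ∂ν, 0 ≤ ε k) (hm : 0 < m) :
    0 ≤ ∫ k, g k / (ε k + m) ∂ν := by
  refine integral_nonneg_of_ae ?_
  filter_upwards [hg0, hε0] with k hgk hk
  exact div_nonneg hgk (by linarith)

end ResolventBound

noncomputable def andersonPhi (U lam x w μ : ℝ) : ℝ :=
  U + (1 + x ^ 2) ^ 2 * (μ - lam) +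
    x ^ 2 / (1 + x ^ 2) * (μ - lam) * (U - (1 + x ^ 2) ^ 2 * (μ - lam)) * w

section AndersonPhi

variable {U lam x w μ : ℝ}

lemma le_andersonPhi_of_le (hw : 0 ≤ w) (hμ₁ : lam ≤ μ) (hμ₂ : μ ≤ lam + U / (1 + x ^ 2) ^ 2) :
    U ≤ andersonPhi U lam x w μ := by
  have hδ : 0 ≤ μ - lam := by linarith
  have hA : 0 ≤ U - (1 + x ^ 2) ^ 2 * (μ - lam) := by
    rw [sub_nonneg, ← le_div_iff₀' (by positivity)]
    linarith
  unfold andersonPhi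
  have : 0 ≤ (1 + x ^ 2) ^ 2 * (μ - lam) := by positivity
  have : 0 ≤ x ^ 2 / (1 + x ^ 2) * (μ - lam) * (U - (1 + x ^ 2) ^ 2 * (μ - lam)) * w := by
    positivity
  linarith

lemma le_andersonPhi_of_lt (hU : 0 ≤ U) (hlam : 0 < lam) (hw : w ≤ 1 / μ)
    (hμ : lam + U / (1 + x ^ 2) ^ 2 < μ) :
    U + (1 + x ^ 2) * (μ - lam) ≤ andersonPhi U lam x w μ := by
  set s := 1 + x ^ 2 with hs_def
  set A := U - s ^ 2 * (μ - lam) with hA_def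
  have hUs : U < s ^ 2 * (μ - lam) := by
    rw [← div_lt_iff₀' (by positivity)]
    linarith
  have hδ : 0 < μ - lam := pos_of_mul_pos_right (hU.trans_lt hUs) (by positivity)
  have hμ0 : 0 < μ := by linarith
  have hAw : x ^ 2 / s * (μ - lam) * (A / μ) ≤ x ^ 2 / s * (μ - lam) * A * w := by
    rw [mul_assoc _ A]
    gcongr
    rw [div_eq_mul_one_div]
    exact mul_le_mul_of_nonpos_left hw (by linarith)
  have hgap : s ^ 2 * (μ - lam) + x ^ 2 / s * (μ - lam) * (A / μ) - s * (μ - lam) =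
      x ^ 2 * (μ - lam) * (s ^ 2 * lam + U) / (s * μ) := by
    rw [hA_def, hs_def]
    field_simp
    ring
  have : 0 ≤ x ^ 2 * (μ - lam) * (s ^ 2 * lam + U) / (s * μ) := by positivity
  unfold andersonPhi
  linarith

lemma andersonPhi_pos (hU : 0 < U) (hlam : 0 < lam) (hw₀ : 0 ≤ w) (hw₁ : w ≤ 1 / μ)
    (hμ : lam ≤ μ) : 0 < andersonPhi U lam x w μ := by
  rcases le_or_gt μ (lam + U / (1 + x ^ 2) ^ 2) with hle | hgt
  · exact hU.trans_le (le_andersonPhi_of_le hw₀ hμ hle)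
  · have := le_andersonPhi_of_lt hU.le hlam hw₁ hgt
    have : 0 ≤ (1 + x ^ 2) * (μ - lam) := mul_nonneg (by positivity) (by linarith)
    linarith

end AndersonPhi

theorem anderson_phi_pos_on_Ici_general {d : ℕ}
    (ε : EuclideanSpace ℝ (Fin d) → ℝ) (hε : Measurable ε)
    (hε0 : ∀ᵐ k ∂volume, 0 ≤ ε k)
    (f₁ : EuclideanSpace ℝ (Fin d) → ℂ) (hf₁ : MemLp f₁ 2 volume)
    (hf₁norm : ∫ k, ‖f₁ k‖ ^ 2 = 1)
    (U lam₁ x₁ : ℝ) (hU : 0 < U) (hlam₁ : 0 < lam₁)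
    (W φ : ℝ → ℝ)
    (hW : ∀ μ, W μ = ∫ k, ‖f₁ k‖ ^ 2 / (ε k + μ))
    (hφ : ∀ μ, φ μ = U + (1 + x₁ ^ 2) ^ 2 * (μ - lam₁) +
        x₁ ^ 2 / (1 + x₁ ^ 2) * (μ - lam₁) *
          (U - (1 + x₁ ^ 2) ^ 2 * (μ - lam₁)) * W μ) :
    (∀ μ, lam₁ ≤ μ → μ ≤ lam₁ + U / (1 + x₁ ^ 2) ^ 2 → U ≤ φ μ) ∧
      (∀ μ, lam₁ + U / (1 + x₁ ^ 2) ^ 2 < μ →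
        U + (1 + x₁ ^ 2) * (μ - lam₁) ≤ φ μ) ∧
      ∀ μ, lam₁ ≤ μ → 0 < φ μ := by
  have hφ' : ∀ μ, φ μ = andersonPhi U lam₁ x₁ (W μ) μ := hφ
  have hsq : Integrable (fun k => ‖f₁ k‖ ^ 2) := hf₁.integrable_norm_pow two_ne_zero
  have hsq0 : ∀ᵐ k ∂volume, 0 ≤ ‖f₁ k‖ ^ 2 := ae_of_all _ fun k => by positivity
  have hW₀ : ∀ μ, 0 < μ → 0 ≤ W μ := fun μ hμ =>
    (hW μ).symm ▸ integral_div_add_const_nonneg hsq0 hε0 hμ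
  have hW₁ : ∀ μ, 0 < μ → W μ ≤ 1 / μ := fun μ hμ => by
    simpa only [hW, hf₁norm] using
      integral_div_add_const_le hsq hsq0 hε.aemeasurable hε0 hμ
  refine ⟨fun μ hμ₁ hμ₂ => ?_, fun μ hμ => ?_, fun μ hμ => ?_⟩
  · rw [hφ']
    exact le_andersonPhi_of_le (hW₀ μ (hlam₁.trans_le hμ₁)) hμ₁ hμ₂
  · have hμ0 : 0 < μ := by
      have : 0 ≤ U / (1 + x₁ ^ 2) ^ 2 := by positivity
      linarith
    rw [hφ']
    exact le_andersonPhi_of_lt hU.le hlam₁ (hW₁ μ hμ0) hμ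
  · have hμ0 := hlam₁.trans_le hμ
    rw [hφ']
    exact andersonPhi_pos hU hlam₁ (hW₀ μ hμ0) (hW₁ μ hμ0) hμ

/-- For every `μ ≥ λ₁` one has `φ(μ) > 0`. More precisely: (i) if
`λ₁ ≤ μ ≤ λ₁ + U·(1+x₁²)⁻²` then `φ(μ) ≥ U`; (ii) if `μ > λ₁ + U·(1+x₁²)⁻²` then
`φ(μ) ≥ U + (1+x₁²)·(μ−λ₁)`. In particular `φ` has no zero in `[λ₁, ∞)`. -/
theorem anderson_phi_pos_on_Ici {d : ℕ} (hd : 0 < d)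
    (ε : EuclideanSpace ℝ (Fin d) → ℝ) (hε : Measurable ε)
    (hε0 : ∀ᵐ k ∂volume, 0 ≤ ε k)
    (f₁ : EuclideanSpace ℝ (Fin d) → ℂ) (hf₁ : MemLp f₁ 2 volume)
    (hf₁norm : ∫ k, ‖f₁ k‖ ^ 2 = 1)
    (U lam₁ x₁ : ℝ) (hU : 0 < U) (hlam₁ : 0 < lam₁)
    (W φ : ℝ → ℝ)
    (hW : ∀ μ, W μ = ∫ k, ‖f₁ k‖ ^ 2 / (ε k + μ))
    (hφ : ∀ μ, φ μ = U + (1 + x₁ ^ 2) ^ 2 * (μ - lam₁) +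
        x₁ ^ 2 / (1 + x₁ ^ 2) * (μ - lam₁) *
          (U - (1 + x₁ ^ 2) ^ 2 * (μ - lam₁)) * W μ) :
    (∀ μ, lam₁ ≤ μ → μ ≤ lam₁ + U / (1 + x₁ ^ 2) ^ 2 → U ≤ φ μ) ∧
      (∀ μ, lam₁ + U / (1 + x₁ ^ 2) ^ 2 < μ →
        U + (1 + x₁ ^ 2) * (μ - lam₁) ≤ φ μ) ∧
      ∀ μ, lam₁ ≤ μ → 0 < φ μ :=
  anderson_phi_pos_on_Ici_general ε hε hε0 f₁ hf₁ hf₁norm U lam₁ x₁ hU hlam₁ W φ hW hφ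
end

section
/- The function φ is strictly increasing on the open interval (0, λ₁). -/
/-!
Write `φ(μ) = U + A (μ - λ₁) + c g(μ) W(μ)` with `A = (1 + x₁²)² > 0`, `c = x₁²/(1 + x₁²) ≥ 0` and
`g(μ) = (μ - λ₁)(U - A (μ - λ₁))`. On `μ ≤ λ₁` the quadratic `g` is nonpositive and increasing,
while `W` is nonnegative and decreasing, so `g W` is increasing; adding the strictly increasing
linear part gives strict monotonicity. No derivative is needed.
-/

open MeasureTheory Set

section ShiftedResolventIntegral

variable {X : Type*} [MeasurableSpace X] {ν : Measure X} {h ε : X → ℝ}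

theorem integrable_div_add_of_nonneg (hh : Integrable h ν) (hε : AEMeasurable ε ν)
    (hε0 : ∀ᵐ x ∂ν, 0 ≤ ε x) {t : ℝ} (ht : 0 < t) :
    Integrable (fun x => h x / (ε x + t)) ν := by
  simp_rw [div_eq_mul_inv]
  refine hh.mul_bdd (hε.add_const t).inv.aestronglyMeasurable (c := t⁻¹) ?_
  filter_upwards [hε0] with x hx
  rw [norm_inv, Real.norm_of_nonneg (by linarith)]
  exact inv_anti₀ ht (by linarith)

theorem integral_div_add_nonneg (hh : 0 ≤ᵐ[ν] h) (hε0 : ∀ᵐ x ∂ν, 0 ≤ ε x) {t : ℝ}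
    (ht : 0 < t) : 0 ≤ ∫ x, h x / (ε x + t) ∂ν :=
  integral_nonneg_of_ae <| by
    filter_upwards [hh, hε0] with x hx hεx
    exact div_nonneg hx (by linarith)

theorem antitoneOn_integral_div_add (hh : Integrable h ν) (hh0 : 0 ≤ᵐ[ν] h)
    (hε : AEMeasurable ε ν) (hε0 : ∀ᵐ x ∂ν, 0 ≤ ε x) :
    AntitoneOn (fun t => ∫ x, h x / (ε x + t) ∂ν) (Ioi 0) := by
  intro s hs t ht hst
  refine integral_mono_ae (integrable_div_add_of_nonneg hh hε hε0 ht)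
    (integrable_div_add_of_nonneg hh hε hε0 hs) ?_
  filter_upwards [hh0, hε0] with x hx hεx
  exact div_le_div_of_nonneg_left hx (by linarith [mem_Ioi.1 hs]) (by linarith)

end ShiftedResolventIntegral

theorem MonotoneOn.mul_antitoneOn_of_nonpos {α R : Type*} [Preorder α] [Ring R] [PartialOrder R]
    [IsOrderedRing R] {f g : α → R} {s : Set α} (hf : MonotoneOn f s) (hg : AntitoneOn g s)
    (hf0 : ∀ x ∈ s, f x ≤ 0) (hg0 : ∀ x ∈ s, 0 ≤ g x) : MonotoneOn (f * g) s :=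
  fun _ ha _ hb hab =>
    (mul_le_mul_of_nonneg_right (hf ha hb hab) (hg0 _ ha)).trans
      (mul_le_mul_of_nonpos_left (hg ha hb hab) (hf0 _ hb))

section Quadratic

variable {U A lam : ℝ}

theorem sub_mul_sub_mul_sub_nonpos (hU : 0 ≤ U) (hA : 0 ≤ A) {μ : ℝ} (hμ : μ ≤ lam) :
    (μ - lam) * (U - A * (μ - lam)) ≤ 0 :=
  mul_nonpos_of_nonpos_of_nonneg (by linarith) (by nlinarith)

theorem monotoneOn_sub_mul_sub_mul_sub (hU : 0 ≤ U) (hA : 0 ≤ A) :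
    MonotoneOn (fun μ => (μ - lam) * (U - A * (μ - lam))) (Iic lam) := by
  intro a ha b hb hab
  have ha' : a ≤ lam := ha
  have hb' : b ≤ lam := hb
  nlinarith [mul_nonneg hA (sub_nonneg.2 hab), mul_nonneg (sub_nonneg.2 hab) (sub_nonneg.2 hb')]

end Quadratic

theorem anderson_phi_strictMonoOn_general {d : ℕ}
    (ε : EuclideanSpace ℝ (Fin d) → ℝ) (hε : Measurable ε)
    (hε0 : ∀ᵐ k ∂volume, 0 ≤ ε k)
    (f₁ : EuclideanSpace ℝ (Fin d) → ℂ) (hf₁ : MemLp f₁ 2 volume)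
    (U lam₁ x₁ : ℝ) (hU : 0 < U)
    (W φ : ℝ → ℝ)
    (hW : ∀ μ, W μ = ∫ k, ‖f₁ k‖ ^ 2 / (ε k + μ))
    (hφ : ∀ μ, φ μ = U + (1 + x₁ ^ 2) ^ 2 * (μ - lam₁) +
        x₁ ^ 2 / (1 + x₁ ^ 2) * (μ - lam₁) *
          (U - (1 + x₁ ^ 2) ^ 2 * (μ - lam₁)) * W μ) :
    StrictMonoOn φ (Ioo 0 lam₁) := by
  set A := (1 + x₁ ^ 2) ^ 2
  have hA : 0 < A := by positivity
  have hc : 0 ≤ x₁ ^ 2 / (1 + x₁ ^ 2) := by positivity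
  have hsq : Integrable (fun k => ‖f₁ k‖ ^ 2) := hf₁.norm.integrable_sq
  have hsq0 : 0 ≤ᵐ[volume] fun k => ‖f₁ k‖ ^ 2 := ae_of_all _ fun k => by positivity
  have hW_anti : AntitoneOn W (Ioo 0 lam₁) := funext hW ▸
    (antitoneOn_integral_div_add hsq hsq0 hε.aemeasurable hε0).mono Ioo_subset_Ioi_self
  have hW_nonneg : ∀ μ ∈ Ioo 0 lam₁, 0 ≤ W μ := fun μ hμ =>
    hW μ ▸ integral_div_add_nonneg hsq0 hε0 hμ.1
  have hgW := ((monotoneOn_sub_mul_sub_mul_sub (lam := lam₁) hU.le hA.le).mono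
    (Ioo_subset_Iio_self.trans Iio_subset_Iic_self)).mul_antitoneOn_of_nonpos hW_anti
    (fun μ hμ => sub_mul_sub_mul_sub_nonpos hU.le hA.le hμ.2.le) hW_nonneg
  have hlin : StrictMonoOn (fun μ => U + A * (μ - lam₁)) (Ioo 0 lam₁) :=
    fun a _ b _ hab => by dsimp only; gcongr
  refine (hlin.add_monotone fun a ha b hb hab =>
    mul_le_mul_of_nonneg_left (hgW ha hb hab) hc).congr fun μ _ => ?_
  simp only [hφ, Pi.mul_apply]
  ring

/-- The function `φ` is strictly increasing on the open interval `(0, λ₁)`. -/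
theorem anderson_phi_strictMonoOn {d : ℕ} (hd : 0 < d)
    (ε : EuclideanSpace ℝ (Fin d) → ℝ) (hε : Measurable ε)
    (hε0 : ∀ᵐ k ∂volume, 0 ≤ ε k)
    (f₁ : EuclideanSpace ℝ (Fin d) → ℂ) (hf₁ : MemLp f₁ 2 volume)
    (hf₁norm : ∫ k, ‖f₁ k‖ ^ 2 = 1)
    (U lam₁ x₁ : ℝ) (hU : 0 < U) (hlam₁ : 0 < lam₁)
    (W φ : ℝ → ℝ)
    (hW : ∀ μ, W μ = ∫ k, ‖f₁ k‖ ^ 2 / (ε k + μ))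
    (hφ : ∀ μ, φ μ = U + (1 + x₁ ^ 2) ^ 2 * (μ - lam₁) +
        x₁ ^ 2 / (1 + x₁ ^ 2) * (μ - lam₁) *
          (U - (1 + x₁ ^ 2) ^ 2 * (μ - lam₁)) * W μ) :
    StrictMonoOn φ (Ioo 0 lam₁) :=
  anderson_phi_strictMonoOn_general ε hε hε0 f₁ hf₁ U lam₁ x₁ hU W φ hW hφ
end

section
/- Assume x₁ ≠ 0 and ∫ |f₁(k)|²/ε(k) dk = +∞. Then φ(μ) → −∞ as μ → 0⁺. -/
/-!
As `μ → 0⁺` the integrands `|f₁|² / (ε + μ)` converge pointwise to `|f₁|² / ε`, whose integral is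
infinite, so Fatou's lemma gives `W(μ) → +∞`. The function `φ` has the form `a(μ) + b(μ) W(μ)` with
`a`, `b` continuous, and `b(0) = -x₁² / (1 + x₁²) · λ₁ · (U + (1 + x₁²)² λ₁) < 0` since `x₁ ≠ 0`;
hence `φ(μ) → -∞`.
-/

open MeasureTheory Set Filter Topology
open scoped ENNReal

namespace MeasureTheory

variable {α : Type*} [MeasurableSpace α] {ν : Measure α}

theorem tendsto_lintegral_nhds_top_of_ae_tendsto {ι : Type*} {u : Filter ι} [u.NeBot]
    [u.IsCountablyGenerated] {f : ι → α → ℝ≥0∞} {F : α → ℝ≥0∞}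
    (hf : ∀ i, AEMeasurable (f i) ν) (hlim : ∀ᵐ a ∂ν, Tendsto (fun i ↦ f i a) u (𝓝 (F a)))
    (hF : ∫⁻ a, F a ∂ν = ∞) :
    Tendsto (fun i ↦ ∫⁻ a, f i a ∂ν) u (𝓝 ∞) := by
  refine tendsto_of_le_liminf_of_limsup_le ?_ le_top
  calc ∞ = ∫⁻ a, liminf (fun i ↦ f i a) u ∂ν := by
        rw [← hF]
        exact lintegral_congr_ae (hlim.mono fun a ha ↦ ha.liminf_eq.symm)
    _ ≤ liminf (fun i ↦ ∫⁻ a, f i a ∂ν) u := lintegral_liminf_le' hf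

variable {g ε : α → ℝ}

theorem integrable_div_add_of_nonneg (hg : Integrable g ν) (hε : AEMeasurable ε ν)
    (hε0 : ∀ᵐ a ∂ν, 0 ≤ ε a) {c : ℝ} (hc : 0 < c) :
    Integrable (fun a ↦ g a / (ε a + c)) ν := by
  refine (hg.norm.div_const c).mono' (hg.aemeasurable.div (hε.add_const c)).aestronglyMeasurable ?_
  filter_upwards [hε0] with a ha
  rw [norm_div, Real.norm_of_nonneg (show 0 ≤ ε a + c by linarith)]
  exact div_le_div_of_nonneg_left (norm_nonneg _) hc (by linarith)

theorem ofReal_integral_div_add (hg : Integrable g ν) (hg0 : ∀ᵐ a ∂ν, 0 ≤ g a)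
    (hε : AEMeasurable ε ν) (hε0 : ∀ᵐ a ∂ν, 0 ≤ ε a) {c : ℝ} (hc : 0 < c) :
    ENNReal.ofReal (∫ a, g a / (ε a + c) ∂ν) =
      ∫⁻ a, ENNReal.ofReal (g a) / ENNReal.ofReal (ε a + c) ∂ν := by
  rw [ofReal_integral_eq_lintegral_ofReal (integrable_div_add_of_nonneg hg hε hε0 hc)]
  · refine lintegral_congr_ae ?_
    filter_upwards [hε0] with a ha
    exact ENNReal.ofReal_div_of_pos (by linarith)
  · filter_upwards [hg0, hε0] with a hga hεa
    exact div_nonneg hga (by linarith)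

theorem tendsto_integral_div_add_nhdsGT_zero_atTop (hg : Integrable g ν) (hg0 : ∀ᵐ a ∂ν, 0 ≤ g a)
    (hε : AEMeasurable ε ν) (hε0 : ∀ᵐ a ∂ν, 0 ≤ ε a)
    (hdiv : ∫⁻ a, ENNReal.ofReal (g a) / ENNReal.ofReal (ε a) ∂ν = ∞) :
    Tendsto (fun c ↦ ∫ a, g a / (ε a + c) ∂ν) (𝓝[>] 0) atTop := by
  rw [← ENNReal.tendsto_ofReal_nhds_top]
  have hlintegral : Tendsto (fun c ↦ ∫⁻ a, ENNReal.ofReal (g a) / ENNReal.ofReal (ε a + c) ∂ν)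
      (𝓝[>] 0) (𝓝 ∞) := by
    refine tendsto_lintegral_nhds_top_of_ae_tendsto
      (fun c ↦ ENNReal.measurable_ofReal.comp_aemeasurable hg.aemeasurable |>.div
        (ENNReal.measurable_ofReal.comp_aemeasurable (hε.add_const c))) (ae_of_all _ fun a ↦ ?_) hdiv
    refine ENNReal.Tendsto.const_div ?_ (Or.inr ENNReal.ofReal_ne_top)
    have : Tendsto (fun c ↦ ε a + c) (𝓝 0) (𝓝 (ε a)) := by
      simpa using (tendsto_id (x := 𝓝 (0 : ℝ))).const_add (ε a)
    exact (ENNReal.continuous_ofReal.tendsto _ |>.comp this).mono_left nhdsWithin_le_nhds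
  refine hlintegral.congr' ?_
  filter_upwards [self_mem_nhdsWithin] with c hc
  exact (ofReal_integral_div_add hg hg0 hε hε0 hc).symm

end MeasureTheory

theorem anderson_phi_tendsto_atBot_general {d : ℕ}
    (ε : EuclideanSpace ℝ (Fin d) → ℝ) (hε : Measurable ε)
    (hε0 : ∀ᵐ k ∂volume, 0 ≤ ε k)
    (f₁ : EuclideanSpace ℝ (Fin d) → ℂ) (hf₁ : MemLp f₁ 2 volume)
    (U lam₁ x₁ : ℝ) (hU : 0 < U) (hlam₁ : 0 < lam₁) (hx₁ : x₁ ≠ 0)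
    (hdiv : ∫⁻ k, ENNReal.ofReal (‖f₁ k‖ ^ 2) / ENNReal.ofReal (ε k) ∂volume = ⊤)
    (W φ : ℝ → ℝ)
    (hW : ∀ μ, W μ = ∫ k, ‖f₁ k‖ ^ 2 / (ε k + μ))
    (hφ : ∀ μ, φ μ = U + (1 + x₁ ^ 2) ^ 2 * (μ - lam₁) +
        x₁ ^ 2 / (1 + x₁ ^ 2) * (μ - lam₁) *
          (U - (1 + x₁ ^ 2) ^ 2 * (μ - lam₁)) * W μ) :
    Tendsto φ (nhdsWithin 0 (Ioi 0)) atBot := by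
  have hW_top : Tendsto W (𝓝[>] 0) atTop := by
    rw [show W = _ from funext hW]
    exact tendsto_integral_div_add_nhdsGT_zero_atTop (hf₁.integrable_norm_pow two_ne_zero)
      (ae_of_all _ fun _ ↦ by positivity) hε.aemeasurable hε0 hdiv
  have hshift : 0 < (1 + x₁ ^ 2) ^ 2 * lam₁ := by positivity
  have hcoeff_neg : x₁ ^ 2 / (1 + x₁ ^ 2) * (0 - lam₁) * (U - (1 + x₁ ^ 2) ^ 2 * (0 - lam₁)) < 0 :=
    mul_neg_of_neg_of_pos (mul_neg_of_pos_of_neg (by positivity) (by linarith)) (by linarith)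
  have hcoeff : Tendsto (fun μ ↦ x₁ ^ 2 / (1 + x₁ ^ 2) * (μ - lam₁) *
      (U - (1 + x₁ ^ 2) ^ 2 * (μ - lam₁))) (𝓝[>] 0) (𝓝 _) :=
    (Continuous.tendsto (by fun_prop) 0).mono_left nhdsWithin_le_nhds
  have hrest : Tendsto (fun μ ↦ U + (1 + x₁ ^ 2) ^ 2 * (μ - lam₁)) (𝓝[>] 0) (𝓝 _) :=
    (Continuous.tendsto (by fun_prop) 0).mono_left nhdsWithin_le_nhds
  rw [show φ = _ from funext hφ]
  exact hrest.add_atBot (hcoeff.neg_mul_atTop hcoeff_neg hW_top)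

/-- Assume `x₁ ≠ 0` and `∫ |f₁ k|²/ε k dk = +∞`. Then `φ(μ) → −∞` as `μ → 0⁺`. -/
theorem anderson_phi_tendsto_atBot {d : ℕ} (hd : 0 < d)
    (ε : EuclideanSpace ℝ (Fin d) → ℝ) (hε : Measurable ε)
    (hε0 : ∀ᵐ k ∂volume, 0 ≤ ε k)
    (f₁ : EuclideanSpace ℝ (Fin d) → ℂ) (hf₁ : MemLp f₁ 2 volume)
    (hf₁norm : ∫ k, ‖f₁ k‖ ^ 2 = 1)
    (U lam₁ x₁ : ℝ) (hU : 0 < U) (hlam₁ : 0 < lam₁) (hx₁ : x₁ ≠ 0)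
    (hdiv : ∫⁻ k, ENNReal.ofReal (‖f₁ k‖ ^ 2) / ENNReal.ofReal (ε k) ∂volume = ⊤)
    (W φ : ℝ → ℝ)
    (hW : ∀ μ, W μ = ∫ k, ‖f₁ k‖ ^ 2 / (ε k + μ))
    (hφ : ∀ μ, φ μ = U + (1 + x₁ ^ 2) ^ 2 * (μ - lam₁) +
        x₁ ^ 2 / (1 + x₁ ^ 2) * (μ - lam₁) *
          (U - (1 + x₁ ^ 2) ^ 2 * (μ - lam₁)) * W μ) :
    Tendsto φ (nhdsWithin 0 (Ioi 0)) atBot :=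
  anderson_phi_tendsto_atBot_general ε hε hε0 f₁ hf₁ U lam₁ x₁ hU hlam₁ hx₁ hdiv W φ hW hφ
end

section
/- Let μ₂ > 0, μ₁ ∈ ℝ, ω ≠ 0, C₆ ∉ {0}, and define f₂(k) = −ω·C₆·((ε(k)+μ₁)/(ε(k)+μ₂))·f₁(k). Assume Γ₁ := ∫ ε(k)|f₁(k)|² dk < ∞ and assume the constraint 1 = −C₆·(1 − (μ₂−μ₁)·∫|f₁(k)|²/(ε(k)+μ₂) dk). Then f₂ is square-integrable, the integral Γ₁₂ := ∫ ε(k)·conj(f₁(k))·f₂(k) dk is a finite real number, and Γ₁₂ = −ω·(C₆·(Γ₁+μ₁) + μ₂). -/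
open MeasureTheory

/-! For `ε ≥ 0` the multiplier `m(ε) = (ε + μ₁) / (ε + μ₂)` is bounded by `1 + |μ₁ - μ₂| / μ₂`, so
`f₂ ∈ L²`. Since `conj f₁ · f₂ = -ω C₆ m(ε) |f₁|²` is real, `Γ₁₂` is `-ω C₆` times the integral of
`ε m(ε) |f₁|²`, and the partial fraction decomposition
`ε (ε + μ₁) / (ε + μ₂) = ε + (μ₁ - μ₂) + μ₂ (μ₂ - μ₁) / (ε + μ₂)`
splits that integral into `Γ₁`, the norm `∫ |f₁|² = 1` and the integral appearing in the
constraint, which eliminates the last one. -/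

lemma abs_add_div_add_le {a b x : ℝ} (hb : 0 < b) (hx : 0 ≤ x) :
    |(x + a) / (x + b)| ≤ 1 + |a - b| / b := by
  have hxb : 0 < x + b := by linarith
  calc |(x + a) / (x + b)| = |1 + (a - b) / (x + b)| := by
        congr 1
        field_simp
        ring
    _ ≤ |1| + |(a - b) / (x + b)| := abs_add_le _ _
    _ = 1 + |a - b| / (x + b) := by rw [abs_one, abs_div, abs_of_pos hxb]
    _ ≤ 1 + |a - b| / b := by gcongr; linarith

section

variable {α : Type*} [MeasurableSpace α] {μ : Measure α} {ε : α → ℝ} {a b : ℝ}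

lemma memLp_ofReal_mul_div_add_mul (hε : Measurable ε) (hε0 : ∀ᵐ k ∂μ, 0 ≤ ε k) (hb : 0 < b)
    (c : ℝ) {p : ENNReal} {f : α → ℂ} (hf : MemLp f p μ) :
    MemLp (fun k => ((c * ((ε k + a) / (ε k + b)) : ℝ) : ℂ) * f k) p μ := by
  refine hf.of_le_mul (c := |c| * (1 + |a - b| / b)) ?_ ?_
  · exact (Complex.measurable_ofReal.comp
      (measurable_const.mul ((hε.add_const a).div (hε.add_const b)))).aestronglyMeasurable.mul hf.1
  · filter_upwards [hε0] with k hk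
    rw [norm_mul, Complex.norm_real, Real.norm_eq_abs, abs_mul]
    gcongr
    exact abs_add_div_add_le hb hk

lemma integrable_div_add_const (hε : Measurable ε) (hε0 : ∀ᵐ k ∂μ, 0 ≤ ε k) (hb : 0 < b)
    {h : α → ℝ} (hh : Integrable h μ) : Integrable (fun k => h k / (ε k + b)) μ := by
  simp_rw [div_eq_mul_inv]
  refine hh.mul_bdd (c := b⁻¹) (hε.add_const b).inv.aestronglyMeasurable ?_
  filter_upwards [hε0] with k hk
  rw [norm_inv, Real.norm_of_nonneg (by linarith)]
  exact inv_anti₀ hb (by linarith)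

lemma mul_div_add_mul_ae_eq (hε0 : ∀ᵐ k ∂μ, 0 ≤ ε k) (hb : 0 < b) (h : α → ℝ) :
    (fun k => ε k * ((ε k + a) / (ε k + b)) * h k) =ᵐ[μ]
      fun k => ε k * h k + (a - b) * h k + b * (b - a) * (h k / (ε k + b)) := by
  filter_upwards [hε0] with k hk
  have : ε k + b ≠ 0 := by linarith
  field_simp
  ring

variable (hε : Measurable ε) (hε0 : ∀ᵐ k ∂μ, 0 ≤ ε k) (hb : 0 < b) {h : α → ℝ}
  (hh : Integrable h μ) (hεh : Integrable (fun k => ε k * h k) μ)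
include hε hε0 hb hh hεh

lemma integrable_add_mul_add_mul_div_add :
    Integrable (fun k => ε k * h k + (a - b) * h k + b * (b - a) * (h k / (ε k + b))) μ :=
  (hεh.add (hh.const_mul _)).add ((integrable_div_add_const hε hε0 hb hh).const_mul _)

lemma integrable_mul_div_add_mul :
    Integrable (fun k => ε k * ((ε k + a) / (ε k + b)) * h k) μ :=
  (integrable_add_mul_add_mul_div_add hε hε0 hb hh hεh).congr
    (mul_div_add_mul_ae_eq hε0 hb h).symm

lemma integral_mul_div_add_mul :
    ∫ k, ε k * ((ε k + a) / (ε k + b)) * h k ∂μ =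
      ∫ k, ε k * h k ∂μ + (a - b) * ∫ k, h k ∂μ + b * (b - a) * ∫ k, h k / (ε k + b) ∂μ := by
  have hsum : Integrable (fun k => ε k * h k + (a - b) * h k) μ := hεh.add (hh.const_mul _)
  rw [integral_congr_ae (mul_div_add_mul_ae_eq hε0 hb h),
    integral_add hsum ((integrable_div_add_const hε hε0 hb hh).const_mul _),
    integral_add hεh (hh.const_mul _), integral_const_mul, integral_const_mul]

end

theorem anderson_Gamma12_formula_general {d : ℕ}
    (ε : EuclideanSpace ℝ (Fin d) → ℝ) (hε : Measurable ε)
    (hε0 : ∀ᵐ k ∂volume, 0 ≤ ε k)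
    (f₁ : EuclideanSpace ℝ (Fin d) → ℂ) (hf₁ : MemLp f₁ 2 volume)
    (hf₁norm : ∫ k, ‖f₁ k‖ ^ 2 = 1)
    (μ₁ μ₂ ω C₆ : ℝ) (hμ₂ : 0 < μ₂)
    (f₂ : EuclideanSpace ℝ (Fin d) → ℂ)
    (hf₂ : ∀ k, f₂ k =
      ((-ω * C₆ * ((ε k + μ₁) / (ε k + μ₂)) : ℝ) : ℂ) * f₁ k)
    (hΓ₁ : Integrable (fun k => ε k * ‖f₁ k‖ ^ 2) volume)
    (hconstraint :
      (1 : ℝ) = -C₆ * (1 - (μ₂ - μ₁) * ∫ k, ‖f₁ k‖ ^ 2 / (ε k + μ₂))) :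
    MemLp f₂ 2 volume ∧
      Integrable (fun k => ((ε k : ℝ) : ℂ) * (starRingEnd ℂ) (f₁ k) * f₂ k) volume ∧
      ∫ k, ((ε k : ℝ) : ℂ) * (starRingEnd ℂ) (f₁ k) * f₂ k =
        ((-ω * (C₆ * ((∫ k, ε k * ‖f₁ k‖ ^ 2) + μ₁) + μ₂) : ℝ) : ℂ) := by
  have hf₁sq : Integrable (fun k => ‖f₁ k‖ ^ 2) volume :=
    (memLp_two_iff_integrable_sq_norm hf₁.1).mp hf₁
  have hreal : ∀ k, ((ε k : ℝ) : ℂ) * (starRingEnd ℂ) (f₁ k) * f₂ k =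
      ((-ω * C₆ * (ε k * ((ε k + μ₁) / (ε k + μ₂)) * ‖f₁ k‖ ^ 2) : ℝ) : ℂ) := fun k => by
    rw [hf₂]
    push_cast
    rw [← Complex.conj_mul']
    ring
  simp_rw [hreal]
  refine ⟨?_, ?_, ?_⟩
  · simpa only [← hf₂] using memLp_ofReal_mul_div_add_mul (a := μ₁) hε hε0 hμ₂ (-ω * C₆) hf₁
  · exact ((integrable_mul_div_add_mul hε hε0 hμ₂ hf₁sq hΓ₁).const_mul _).ofReal
  · rw [integral_complex_ofReal, integral_const_mul,
      integral_mul_div_add_mul hε hε0 hμ₂ hf₁sq hΓ₁, hf₁norm]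
    congr 1
    linear_combination (ω * μ₂) * hconstraint

/-- Let `μ₂ > 0`, `μ₁ ∈ ℝ`, `ω ≠ 0`, `C₆ ≠ 0`, and
`f₂ k = −ω·C₆·((ε k+μ₁)/(ε k+μ₂))·f₁ k`. Assume `Γ₁ := ∫ ε k·|f₁ k|² dk < ∞` and the
constraint `1 = −C₆·(1 − (μ₂−μ₁)·∫|f₁ k|²/(ε k+μ₂) dk)`. Then `f₂` is
square-integrable, `Γ₁₂ := ∫ ε k·conj(f₁ k)·f₂ k dk` is a finite real number, and
`Γ₁₂ = −ω·(C₆·(Γ₁+μ₁) + μ₂)`. -/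
theorem anderson_Gamma12_formula {d : ℕ} (hd : 0 < d)
    (ε : EuclideanSpace ℝ (Fin d) → ℝ) (hε : Measurable ε)
    (hε0 : ∀ᵐ k ∂volume, 0 ≤ ε k)
    (f₁ : EuclideanSpace ℝ (Fin d) → ℂ) (hf₁ : MemLp f₁ 2 volume)
    (hf₁norm : ∫ k, ‖f₁ k‖ ^ 2 = 1)
    (μ₁ μ₂ ω C₆ : ℝ) (hμ₂ : 0 < μ₂) (hω : ω ≠ 0) (hC₆ : C₆ ≠ 0)
    (f₂ : EuclideanSpace ℝ (Fin d) → ℂ)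
    (hf₂ : ∀ k, f₂ k =
      ((-ω * C₆ * ((ε k + μ₁) / (ε k + μ₂)) : ℝ) : ℂ) * f₁ k)
    (hΓ₁ : Integrable (fun k => ε k * ‖f₁ k‖ ^ 2) volume)
    (hconstraint :
      (1 : ℝ) = -C₆ * (1 - (μ₂ - μ₁) * ∫ k, ‖f₁ k‖ ^ 2 / (ε k + μ₂))) :
    MemLp f₂ 2 volume ∧
      Integrable (fun k => ((ε k : ℝ) : ℂ) * (starRingEnd ℂ) (f₁ k) * f₂ k) volume ∧
      ∫ k, ((ε k : ℝ) : ℂ) * (starRingEnd ℂ) (f₁ k) * f₂ k =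
        ((-ω * (C₆ * ((∫ k, ε k * ‖f₁ k‖ ^ 2) + μ₁) + μ₂) : ℝ) : ℂ) :=
  anderson_Gamma12_formula_general ε hε hε0 f₁ hf₁ hf₁norm μ₁ μ₂ ω C₆ hμ₂ f₂ hf₂ hΓ₁ hconstraint
end

section
/- Let x₁ > 0, λ₁, ε_d, μ₂ ∈ ℝ and U > 0, and define C₁ = U/(1+x₁²)², C₂ = x₁·C₁, C₃ = x₁²·C₁, C₆ = √(1+x₁²) − 1, C₇ = −λ₁, C₈ = (1/x₁²)·[(2+x₁²)·ε_d + (2−x₁²)·λ₁ − 2√(1+x₁²)·(ε_d + λ₁·(1−x₁²))], and Γ₁ = (λ₁+ε_d)/x₁² − λ₁. Assume U ≠ (1+x₁²)²·(λ₁−μ₂) (equivalently C₁+C₇+μ₂ ≠ 0). Then the quantity μ₁ := −[2C₂² + (C₁+C₇+μ₂)·(−2C₃ − C₈ + C₆·(μ₂ + C₆·Γ₁))] / [C₆·(C₆+1)·(C₁+C₇+μ₂)] equals x₁²·λ₁/((1+x₁²) − √(1+x₁²)) − μ₂/√(1+x₁²) − 2U·x₁²·(λ₁−μ₂)/([U −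 (1+x₁²)²·(λ₁−μ₂)]·[(1+x₁²) − √(1+x₁²)]). In particular the impurity energy ε_d cancels from the expression. -/
/-!
Write `s = √(1+x₁²)`, so `C₆ = s - 1` and `x₁² = s² - 1`. The whole `εd`-dependence sits in
`C₈ - C₆²Γ₁`, and this combination collapses to `x₁²λ₁` once `s² = 1 + x₁²` is used. What is
left is a rational identity in `C₁` and `D = C₁ + C₇ + μ₂`; since `D - C₁ = μ₂ - λ₁` and
`C₁ / D = U / (U - (1+x₁²)²(λ₁-μ₂))`, it takes the stated form.
-/

lemma anderson_C₈_eq_C₆_sq_mul_Γ₁_add (x s lam εd : ℝ) (hx : x ≠ 0) (hs : s ^ 2 = 1 + x ^ 2) :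
    (1 / x ^ 2) * ((2 + x ^ 2) * εd + (2 - x ^ 2) * lam - 2 * s * (εd + lam * (1 - x ^ 2))) =
      (s - 1) ^ 2 * ((lam + εd) / x ^ 2 - lam) + x ^ 2 * lam := by
  field_simp
  linear_combination (-(εd + (1 - x ^ 2) * lam)) * hs

lemma anderson_mu1_eq (a C₁ lam μ₂ c : ℝ) (hc : c ≠ 0) (hc1 : c + 1 ≠ 0)
    (hD : C₁ - lam + μ₂ ≠ 0) :
    -(2 * (a * C₁ ^ 2) + (C₁ - lam + μ₂) * (-2 * (a * C₁) - a * lam + c * μ₂)) /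
        (c * (c + 1) * (C₁ - lam + μ₂)) =
      a * lam / (c * (c + 1)) - μ₂ / (c + 1) -
        2 * a * C₁ * (lam - μ₂) / ((C₁ - lam + μ₂) * (c * (c + 1))) := by
  field_simp
  ring

theorem anderson_mu1_formula_general (x₁ lam₁ εd μ₂ U : ℝ) (hx₁ : 0 < x₁)
    (C₁ C₂ C₃ C₆ C₇ C₈ Γ₁ : ℝ)
    (hC₁ : C₁ = U / (1 + x₁ ^ 2) ^ 2)
    (hC₂ : C₂ = x₁ * C₁)
    (hC₃ : C₃ = x₁ ^ 2 * C₁)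
    (hC₆ : C₆ = Real.sqrt (1 + x₁ ^ 2) - 1)
    (hC₇ : C₇ = -lam₁)
    (hC₈ : C₈ = (1 / x₁ ^ 2) *
      ((2 + x₁ ^ 2) * εd + (2 - x₁ ^ 2) * lam₁ -
        2 * Real.sqrt (1 + x₁ ^ 2) * (εd + lam₁ * (1 - x₁ ^ 2))))
    (hΓ₁ : Γ₁ = (lam₁ + εd) / x₁ ^ 2 - lam₁)
    (hne : U ≠ (1 + x₁ ^ 2) ^ 2 * (lam₁ - μ₂)) :
    -(2 * C₂ ^ 2 + (C₁ + C₇ + μ₂) * (-2 * C₃ - C₈ + C₆ * (μ₂ + C₆ * Γ₁))) /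
        (C₆ * (C₆ + 1) * (C₁ + C₇ + μ₂)) =
      x₁ ^ 2 * lam₁ / ((1 + x₁ ^ 2) - Real.sqrt (1 + x₁ ^ 2)) -
        μ₂ / Real.sqrt (1 + x₁ ^ 2) -
        2 * U * x₁ ^ 2 * (lam₁ - μ₂) /
          ((U - (1 + x₁ ^ 2) ^ 2 * (lam₁ - μ₂)) *
            ((1 + x₁ ^ 2) - Real.sqrt (1 + x₁ ^ 2))) := by
  set s := Real.sqrt (1 + x₁ ^ 2)
  have hs : s ^ 2 = 1 + x₁ ^ 2 := Real.sq_sqrt (by positivity)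
  have hs1 : 1 < s := Real.lt_sqrt_of_sq_lt (by nlinarith)
  have hC₆s : C₆ * (C₆ + 1) = (1 + x₁ ^ 2) - s := by rw [hC₆, ← hs]; ring
  have hD : C₁ + C₇ + μ₂ = C₁ - lam₁ + μ₂ := by rw [hC₇, sub_eq_add_neg]
  have hUD : U - (1 + x₁ ^ 2) ^ 2 * (lam₁ - μ₂) = (1 + x₁ ^ 2) ^ 2 * (C₁ - lam₁ + μ₂) := by
    rw [hC₁]; field_simp; ring
  have hD0 : C₁ - lam₁ + μ₂ ≠ 0 := fun h ↦ hne (sub_eq_zero.mp (by rw [hUD, h, mul_zero]))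
  have hnum : 2 * C₂ ^ 2 + (C₁ + C₇ + μ₂) * (-2 * C₃ - C₈ + C₆ * (μ₂ + C₆ * Γ₁)) =
      2 * (x₁ ^ 2 * C₁ ^ 2) +
        (C₁ - lam₁ + μ₂) * (-2 * (x₁ ^ 2 * C₁) - x₁ ^ 2 * lam₁ + C₆ * μ₂) := by
    rw [hC₈, anderson_C₈_eq_C₆_sq_mul_Γ₁_add x₁ s lam₁ εd hx₁.ne' hs, ← hC₆, ← hΓ₁, hC₂, hC₃, hD]
    ring
  rw [hnum, hD, anderson_mu1_eq _ _ _ _ _ (by linarith) (by linarith) hD0, hC₆s, hC₆,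
    sub_add_cancel, hUD, hC₁]
  field_simp

/-- With the coefficients `C₁,…,C₈` of the first unitary transformation of the Anderson
impurity model and `Γ₁ = (λ₁+εd)/x₁² − λ₁`, and assuming `U ≠ (1+x₁²)²(λ₁−μ₂)`
(i.e. `C₁+C₇+μ₂ ≠ 0`), the quantity
`μ₁ = −[2C₂² + (C₁+C₇+μ₂)(−2C₃ − C₈ + C₆(μ₂ + C₆Γ₁))]/[C₆(C₆+1)(C₁+C₇+μ₂)]`
equals
`x₁²λ₁/((1+x₁²) − √(1+x₁²)) − μ₂/√(1+x₁²)
  − 2Ux₁²(λ₁−μ₂)/([U − (1+x₁²)²(λ₁−μ₂)]·[(1+x₁²) − √(1+x₁²)])`;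
in particular the impurity energy `εd` cancels from the expression. -/
theorem anderson_mu1_formula (x₁ lam₁ εd μ₂ U : ℝ) (hx₁ : 0 < x₁) (hU : 0 < U)
    (C₁ C₂ C₃ C₆ C₇ C₈ Γ₁ : ℝ)
    (hC₁ : C₁ = U / (1 + x₁ ^ 2) ^ 2)
    (hC₂ : C₂ = x₁ * C₁)
    (hC₃ : C₃ = x₁ ^ 2 * C₁)
    (hC₆ : C₆ = Real.sqrt (1 + x₁ ^ 2) - 1)
    (hC₇ : C₇ = -lam₁)
    (hC₈ : C₈ = (1 / x₁ ^ 2) *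
      ((2 + x₁ ^ 2) * εd + (2 - x₁ ^ 2) * lam₁ -
        2 * Real.sqrt (1 + x₁ ^ 2) * (εd + lam₁ * (1 - x₁ ^ 2))))
    (hΓ₁ : Γ₁ = (lam₁ + εd) / x₁ ^ 2 - lam₁)
    (hne : U ≠ (1 + x₁ ^ 2) ^ 2 * (lam₁ - μ₂)) :
    -(2 * C₂ ^ 2 + (C₁ + C₇ + μ₂) * (-2 * C₃ - C₈ + C₆ * (μ₂ + C₆ * Γ₁))) /
        (C₆ * (C₆ + 1) * (C₁ + C₇ + μ₂)) =
      x₁ ^ 2 * lam₁ / ((1 + x₁ ^ 2) - Real.sqrt (1 + x₁ ^ 2)) -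
        μ₂ / Real.sqrt (1 + x₁ ^ 2) -
        2 * U * x₁ ^ 2 * (lam₁ - μ₂) /
          ((U - (1 + x₁ ^ 2) ^ 2 * (lam₁ - μ₂)) *
            ((1 + x₁ ^ 2) - Real.sqrt (1 + x₁ ^ 2))) :=
  anderson_mu1_formula_general x₁ lam₁ εd μ₂ U hx₁ C₁ C₂ C₃ C₆ C₇ C₈ Γ₁ hC₁ hC₂ hC₃ hC₆ hC₇ hC₈ hΓ₁
    hne
end
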